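/- For pairwise distinct indices i, j, k and every e ∈ (ℝ³)ⁿ, the Lie–Poisson bracket satisfies {f_{ij}, f_{jk}}(e) = −4 e_i · (e_j × e_k). -/

import Mathlib

open Matrix

/-- The gradient of `f : (ℝ³)ⁿ → ℝ` at `e` with respect to the `m`-th `ℝ³` factor. -/
noncomputable def grad3 (n : ℕ) (f : (Fin n → Fin 3 → ℝ) → ℝ)
    (e : Fin n → Fin 3 → ℝ) (m : Fin n) : Fin 3 → ℝ :=
  fun a => fderiv ℝ f e (Pi.single m (Pi.single a 1))

/-- The Lie–Poisson bracket on `(ℝ³)ⁿ`: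
`{f,h}(e) = ∑ₘ eₘ ⬝ (∇ₘ f(e) × ∇ₘ h(e))`. -/
noncomputable def pbracket (n : ℕ) (f h : (Fin n → Fin 3 → ℝ) → ℝ)
    (e : Fin n → Fin 3 → ℝ) : ℝ :=
  ∑ m, e m ⬝ᵥ (crossProduct (grad3 n f e m) (grad3 n h e m))

/-- `f_{ij}(e) = ‖e_i + e_j‖²`. -/
def fquad (n : ℕ) (i j : Fin n) (e : Fin n → Fin 3 → ℝ) : ℝ :=
  (e i + e j) ⬝ᵥ (e i + e j)

noncomputable def pa (n : ℕ) (i j : Fin n) (a : Fin 3) :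
    (Fin n → Fin 3 → ℝ) →L[ℝ] ℝ :=
  (ContinuousLinearMap.proj (R := ℝ) (φ := fun _ : Fin 3 => ℝ) a).comp
    (ContinuousLinearMap.proj (R := ℝ) (φ := fun _ : Fin n => Fin 3 → ℝ) i) +
  (ContinuousLinearMap.proj (R := ℝ) (φ := fun _ : Fin 3 => ℝ) a).comp
    (ContinuousLinearMap.proj (R := ℝ) (φ := fun _ : Fin n => Fin 3 → ℝ) j)

lemma hasFDerivAt_fquad (n : ℕ) (i j : Fin n) (e : Fin n → Fin 3 → ℝ) :
    HasFDerivAt (fquad n i j)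
      (∑ a : Fin 3, (2 * (e i a + e j a)) • pa n i j a) e := by
  have hf : fquad n i j = fun w => ∑ a : Fin 3, (w i a + w j a) * (w i a + w j a) := by
    funext w; simp [fquad, dotProduct]
  rw [hf]
  apply HasFDerivAt.fun_sum
  intro a _
  have hl : HasFDerivAt (fun w : Fin n → Fin 3 → ℝ => w i a + w j a) (pa n i j a) e :=
    (pa n i j a).hasFDerivAt
  have := hl.fun_mul hl
  rw [two_mul, add_smul]
  exact this

lemma grad3_fquad (n : ℕ) (i j : Fin n) (e : Fin n → Fin 3 → ℝ) (m : Fin n) (b : Fin 3) :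
    grad3 n (fquad n i j) e m b =
      2 * (e i b + e j b) * ((if i = m then 1 else 0) + (if j = m then 1 else 0)) := by
  rw [grad3, (hasFDerivAt_fquad n i j e).fderiv]
  simp only [ContinuousLinearMap.sum_apply, ContinuousLinearMap.smul_apply, pa,
    ContinuousLinearMap.add_apply, ContinuousLinearMap.comp_apply,
    ContinuousLinearMap.proj_apply, Pi.single_apply, apply_ite (fun f : Fin 3 → ℝ => f _),
    Pi.zero_apply, smul_eq_mul]
  rw [Finset.sum_eq_single b]
  · split_ifs <;> simp
  · intro x _ hx
    split_ifs <;> simp [Pi.single_eq_of_ne hx]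
  · simp

/-- `{f_{ij}, f_{jk}} = −4 e_i ⬝ (e_j × e_k)` for pairwise distinct `i, j, k`. -/
theorem bracket_fquad (n : ℕ) (i j k : Fin n)
    (hij : i ≠ j) (hjk : j ≠ k) (hik : i ≠ k) (e : Fin n → Fin 3 → ℝ) :
    pbracket n (fquad n i j) (fquad n j k) e = -4 * (e i ⬝ᵥ crossProduct (e j) (e k)) := by
  have hz : ∀ (i' j' m : Fin n), i' ≠ m → j' ≠ m → grad3 n (fquad n i' j') e m = 0 := by
    intro i' j' m hi hj
    funext b
    rw [grad3_fquad]
    simp [hi, hj]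
  unfold pbracket
  rw [Finset.sum_eq_single j]
  · have h1 : grad3 n (fquad n i j) e j = fun b => 2 * (e i b + e j b) := by
      funext b; rw [grad3_fquad]; simp [hij]
    have h2 : grad3 n (fquad n j k) e j = fun b => 2 * (e j b + e k b) := by
      funext b; rw [grad3_fquad]; simp [hjk.symm, hjk]
    rw [h1, h2]
    simp [crossProduct, dotProduct, Fin.sum_univ_three]
    ring
  · intro m _ hmj
    rcases eq_or_ne m i with hm | hmi
    · rw [hm, hz j k i hij.symm hik.symm, map_zero, dotProduct_zero]
    rcases eq_or_ne m k with hm | hmk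
    · rw [hm, hz i j k hik hjk, map_zero, LinearMap.zero_apply, dotProduct_zero]
    · rw [hz i j m (Ne.symm hmi) (fun h => hmj h.symm), map_zero,
        LinearMap.zero_apply, dotProduct_zero]
  · simp
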